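/- Let f be a Schwartz function on ℝ^d, let x = U(f), let α ≥ 0 be a real number, and let k ≥ 0 be an integer. Let J^β denote multiplication by (1 + |r|²)^{β/2} on L²(ℝ^d; ℂ) (which preserves the Schwartz space for every β ∈ ℝ), and let δ^k(x) be the k-th iterated commutator of x with J = J¹, defined on the Schwartz space. Then the operator [J^α, δ^k(x)] J^{1−α} = (J^α δ^k(x) − δ^k(x) J^α) J^{1−α}, defined on the Schwartz space S(ℝ^d), extends to a bounded operator on L²(ℝ^d; ℂ). -/

import Mathlib

open MeasureTheory Complex Filter

noncomputable section

/-- `ℝ^d` as Euclidean space. -/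
abbrev Ed (d : ℕ) : Type := EuclideanSpace ℝ (Fin d)

/-- The pairing `⟨t, θ r⟩` where `θ` acts as a matrix on `r`. -/
def pairing {d : ℕ} (θ : Matrix (Fin d) (Fin d) ℝ) (t r : Ed d) : ℝ :=
  ∑ i, t i * ∑ j, θ i j * r j

/-- The Weyl operator at `t`, acting on functions:
`(U(t)ξ)(r) = exp(−(i/2)⟨t, θr⟩) ξ(r − t)`. -/
def weyl {d : ℕ} (θ : Matrix (Fin d) (Fin d) ℝ) (t : Ed d) (ξ : Ed d → ℂ) : Ed d → ℂ :=
  fun r => Complex.exp (-(Complex.I / 2) * (pairing θ t r : ℂ)) * ξ (r - t)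

/-- The complex Hilbert space `L²(ℝ^d; ℂ)`. -/
abbrev L2 (d : ℕ) := Lp ℂ 2 (volume : Measure (Ed d))
/-- Multiplication by `(1 + |r|²)^{β/2}`, i.e. the Bessel potential power `J^β`,
acting on functions. -/
def Jpow {d : ℕ} (β : ℝ) (ξ : Ed d → ℂ) : Ed d → ℂ :=
  fun r => (((1 + ‖r‖ ^ 2) ^ (β / 2) : ℝ) : ℂ) * ξ r

/-- `L(T) = J⁻¹ (J² T − T J²)`, acting on operators on functions. -/
def Lop {d : ℕ} (A : (Ed d → ℂ) → (Ed d → ℂ)) : (Ed d → ℂ) → (Ed d → ℂ) :=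
  fun ξ => Jpow (-1) (Jpow 2 (A ξ) - A (Jpow 2 ξ))

/-- `δ(T) = J T − T J`, the commutator with `J`, acting on operators on functions. -/
def deltaOp {d : ℕ} (A : (Ed d → ℂ) → (Ed d → ℂ)) : (Ed d → ℂ) → (Ed d → ℂ) :=
  fun ξ => Jpow 1 (A ξ) - A (Jpow 1 ξ)

/-- The iterates `L^k(T)`. -/
def LIter {d : ℕ} (A : (Ed d → ℂ) → (Ed d → ℂ)) : ℕ → ((Ed d → ℂ) → (Ed d → ℂ))
  | 0 => A
  | k + 1 => Lop (LIter A k)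

/-- The iterates `δ^k(T)`. -/
def deltaIter {d : ℕ} (A : (Ed d → ℂ) → (Ed d → ℂ)) : ℕ → ((Ed d → ℂ) → (Ed d → ℂ))
  | 0 => A
  | k + 1 => deltaOp (deltaIter A k)

/-- A function on `ℝ^d` is Schwartz if it agrees with (the function underlying) an element
of the Schwartz space. -/
def IsSchwartzFun {d : ℕ} (ξ : Ed d → ℂ) : Prop :=
  ∃ g : SchwartzMap (Ed d) ℂ, ⇑g = ξ

/-- An operator, defined at the level of functions, has bounded extension to `L²` if it is
`L²`-bounded on the Schwartz space (which is dense in `L²`). -/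
def HasBddExt {d : ℕ} (A : (Ed d → ℂ) → (Ed d → ℂ)) : Prop :=
  ∃ C : ℝ, ∀ ξ : SchwartzMap (Ed d) ℂ,
    eLpNorm (A ⇑ξ) 2 volume ≤ ENNReal.ofReal C * eLpNorm (⇑ξ) 2 volume


/-- `U(f)` acting pointwise on functions: `(U(f)ξ)(s) = ∫ f(t) (U(t)ξ)(s) dt`. -/
def UfRaw {d : ℕ} (θ : Matrix (Fin d) (Fin d) ℝ) (f : Ed d → ℂ) :
    (Ed d → ℂ) → (Ed d → ℂ) :=
  fun ξ s => ∫ t : Ed d, f t * weyl θ t ξ s ∂volume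

open scoped ENNReal

/-!
By induction on `k`, `δ^k(U(f)) J^β` is the integral operator with kernel
`f(t) (⟨s⟩ - ⟨s - t⟩)^k U(t) J^β`, where `⟨r⟩ = (1 + |r|²)^{1/2}`; hence
`[J^α, δ^k(U(f))] J^{1-α}` has kernel
`f(t) (⟨s⟩ - ⟨s - t⟩)^k (⟨s⟩^α - ⟨s - t⟩^α) ⟨s - t⟩^{1-α} U(t)`.
Since `⟨·⟩` is `1`-Lipschitz and, by the mean value theorem,
`|a^α - b^α| b^{1-α} ≤ α |a - b| (1 + |a - b|)^{|α-1|}` for `a, b ≥ 1`, this kernel is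
dominated by `g(t) |ξ(s - t)|` with `g(t) = α |t|^{k+1} (1 + |t|)^{|α-1|} |f(t)|`, which is
integrable because `f` is Schwartz. Young's inequality `‖g ⋆ |ξ|‖₂ ≤ ‖g‖₁ ‖ξ‖₂` concludes.
-/

theorem Real.rpow_le_one_add_rpow_abs {y c : ℝ} (e : ℝ) (hc : 0 ≤ c) (hy : y ≤ 1 + c)
    (hy' : 1 ≤ y * (1 + c)) : y ^ e ≤ (1 + c) ^ |e| := by
  have hc1 : 0 < 1 + c := by linarith
  have hy0 : 0 < y := pos_of_mul_pos_left (one_pos.trans_le hy') hc1.le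
  rcases le_total 0 e with he | he
  · rw [abs_of_nonneg he]
    exact Real.rpow_le_rpow hy0.le hy he
  · have hinv : y⁻¹ ≤ 1 + c := by rwa [inv_le_iff_one_le_mul₀ hy0, mul_comm]
    calc y ^ e = y⁻¹ ^ (-e) := by rw [Real.inv_rpow hy0.le, Real.rpow_neg hy0.le, inv_inv]
      _ ≤ (1 + c) ^ |e| := by
          rw [abs_of_nonpos he]
          exact Real.rpow_le_rpow (by positivity) hinv (by linarith)

theorem abs_rpow_sub_rpow_mul_rpow_le {a b α : ℝ} (hα : 0 ≤ α) (ha : 1 ≤ a) (hb : 1 ≤ b) :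
    |a ^ α - b ^ α| * b ^ (1 - α) ≤ α * |a - b| * (1 + |a - b|) ^ |α - 1| := by
  set c := |a - b|
  have hc : 0 ≤ c := abs_nonneg _
  have hb0 : 0 < b := by linarith
  have hderiv : ∀ x ∈ Set.uIcc b a,
      HasDerivWithinAt (fun x => x ^ α) (α * x ^ (α - 1)) (Set.uIcc b a) x := fun x hx =>
    (Real.hasDerivAt_rpow_const
      (Or.inl (by linarith [(le_min hb ha).trans hx.1]))).hasDerivWithinAt
  have hderiv_le : ∀ x ∈ Set.uIcc b a,
      ‖α * x ^ (α - 1)‖ ≤ α * (1 + c) ^ |α - 1| * b ^ (α - 1) := by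
    rintro x ⟨hx_min, hx_max⟩
    have hx1 : 1 ≤ x := (le_min hb ha).trans hx_min
    have hx0 : 0 < x := by linarith
    -- `x` lies between `a` and `b`, so `x / b ∈ [1 / (1 + c), 1 + c]`.
    have hmax : max b a ≤ b + c := max_le (by linarith) (by linarith [le_abs_self (a - b)])
    have hmin : b - c ≤ min b a := le_min (by linarith) (by linarith [neg_abs_le (a - b)])
    have hxb : x / b ≤ 1 + c := by
      rw [div_le_iff₀ hb0]
      nlinarith
    have hbx : 1 ≤ x / b * (1 + c) := by
      rw [div_mul_eq_mul_div, le_div_iff₀ hb0]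
      nlinarith [mul_le_mul_of_nonneg_right hx1 hc]
    rw [Real.norm_eq_abs, abs_of_nonneg (by positivity), mul_assoc]
    gcongr
    calc x ^ (α - 1) = (x / b) ^ (α - 1) * b ^ (α - 1) := by
          rw [Real.div_rpow hx0.le hb0.le, div_mul_cancel₀ _ (by positivity)]
      _ ≤ (1 + c) ^ |α - 1| * b ^ (α - 1) := by
          gcongr
          exact Real.rpow_le_one_add_rpow_abs _ hc hxb hbx
  have hmvt := Convex.norm_image_sub_le_of_norm_hasDerivWithin_le hderiv hderiv_le
    (convex_uIcc b a) Set.left_mem_uIcc Set.right_mem_uIcc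
  rw [Real.norm_eq_abs, Real.norm_eq_abs] at hmvt
  have hcancel : b ^ (α - 1) * b ^ (1 - α) = 1 := by rw [← Real.rpow_add hb0]; norm_num
  calc |a ^ α - b ^ α| * b ^ (1 - α)
      ≤ α * (1 + c) ^ |α - 1| * b ^ (α - 1) * c * b ^ (1 - α) := by gcongr
    _ = α * c * (1 + c) ^ |α - 1| := by
        linear_combination (α * (1 + c) ^ |α - 1| * c) * hcancel

theorem ENNReal.sq_lintegral_mul_le {α : Type*} [MeasurableSpace α] {μ : Measure α}
    {g h : α → ℝ≥0∞} (hg : AEMeasurable g μ) (hh : AEMeasurable h μ) :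
    (∫⁻ a, g a * h a ∂μ) ^ 2 ≤ (∫⁻ a, g a ∂μ) * ∫⁻ a, g a * h a ^ 2 ∂μ := by
  have hsqrt : ∀ x : ℝ≥0∞, (x ^ (1 / 2 : ℝ)) ^ 2 = x := fun x => by
    rw [← ENNReal.rpow_natCast, ← ENNReal.rpow_mul]; norm_num
  have hintegrand : ∀ a, g a ^ (1 / 2 : ℝ) * (g a * h a ^ 2) ^ (1 / 2 : ℝ) = g a * h a :=
    fun a => by
      rw [← ENNReal.mul_rpow_of_nonneg _ _ (by norm_num), ← mul_assoc, ← sq, ← mul_pow,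
        ← ENNReal.rpow_natCast, ← ENNReal.rpow_mul]
      norm_num
  have hholder : ∫⁻ a, g a ^ (1 / 2 : ℝ) * (g a * h a ^ 2) ^ (1 / 2 : ℝ) ∂μ
      ≤ (∫⁻ a, g a ∂μ) ^ (1 / 2 : ℝ) * (∫⁻ a, g a * h a ^ 2 ∂μ) ^ (1 / 2 : ℝ) :=
    ENNReal.lintegral_mul_norm_pow_le hg (hg.mul (hh.pow_const 2)) (by norm_num) (by norm_num)
      (by norm_num)
  simp only [hintegrand] at hholder
  calc (∫⁻ a, g a * h a ∂μ) ^ 2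
      ≤ ((∫⁻ a, g a ∂μ) ^ (1 / 2 : ℝ) * (∫⁻ a, g a * h a ^ 2 ∂μ) ^ (1 / 2 : ℝ)) ^ 2 := by
        gcongr
    _ = (∫⁻ a, g a ∂μ) * ∫⁻ a, g a * h a ^ 2 ∂μ := by rw [mul_pow, hsqrt, hsqrt]

theorem eLpNorm_two_sq {α ε : Type*} [MeasurableSpace α] [ENorm ε] {μ : Measure α}
    (u : α → ε) : eLpNorm u 2 μ ^ 2 = ∫⁻ a, ‖u a‖ₑ ^ 2 ∂μ := by
  simpa using eLpNorm_nnreal_pow_eq_lintegral (μ := μ) (f := u) (p := 2) two_ne_zero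

section Young

variable {G : Type*} [MeasurableSpace G] [AddGroup G] [MeasurableAdd G] [MeasurableSub₂ G]
  {μ : Measure G} [SFinite μ] [μ.IsAddRightInvariant]

theorem lintegral_sq_lintegral_mul_sub_le {g h : G → ℝ≥0∞} (hg : Measurable g)
    (hh : Measurable h) :
    ∫⁻ s, (∫⁻ t, g t * h (s - t) ∂μ) ^ 2 ∂μ ≤ (∫⁻ t, g t ∂μ) ^ 2 * ∫⁻ s, h s ^ 2 ∂μ := by
  have hjoint : Measurable fun p : G × G => g p.2 * h (p.1 - p.2) ^ 2 :=
    (hg.comp measurable_snd).mul ((hh.comp measurable_sub).pow_const 2)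
  have hinner : ∀ t, ∫⁻ s, g t * h (s - t) ^ 2 ∂μ = g t * ∫⁻ s, h s ^ 2 ∂μ := fun t => by
    rw [lintegral_const_mul _ (by fun_prop : Measurable fun s => h (s - t) ^ 2),
      lintegral_sub_right_eq_self (fun s => h s ^ 2) t]
  calc ∫⁻ s, (∫⁻ t, g t * h (s - t) ∂μ) ^ 2 ∂μ
      ≤ ∫⁻ s, (∫⁻ t, g t ∂μ) * ∫⁻ t, g t * h (s - t) ^ 2 ∂μ ∂μ :=
        lintegral_mono fun s => ENNReal.sq_lintegral_mul_le hg.aemeasurable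
          (hh.comp (measurable_const.sub measurable_id)).aemeasurable
    _ = (∫⁻ t, g t ∂μ) * ∫⁻ t, ∫⁻ s, g t * h (s - t) ^ 2 ∂μ ∂μ := by
        rw [lintegral_const_mul _ hjoint.lintegral_prod_right',
          lintegral_lintegral_swap hjoint.aemeasurable]
    _ = (∫⁻ t, g t ∂μ) ^ 2 * ∫⁻ s, h s ^ 2 ∂μ := by
        simp_rw [hinner, lintegral_mul_const _ hg, sq, mul_assoc]

theorem eLpNorm_two_le_of_enorm_le_lintegral_mul_sub {E : Type*} [NormedAddCommGroup E]
    {F : G → E} {g h : G → ℝ≥0∞} (hg : Measurable g) (hh : Measurable h)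
    (hF : ∀ s, ‖F s‖ₑ ≤ ∫⁻ t, g t * h (s - t) ∂μ) :
    eLpNorm F 2 μ ≤ (∫⁻ t, g t ∂μ) * eLpNorm h 2 μ := by
  rw [← ENNReal.pow_le_pow_left_iff two_ne_zero, mul_pow, eLpNorm_two_sq, eLpNorm_two_sq]
  calc ∫⁻ s, ‖F s‖ₑ ^ 2 ∂μ ≤ ∫⁻ s, (∫⁻ t, g t * h (s - t) ∂μ) ^ 2 ∂μ := by
        gcongr with s
        exact hF s
    _ ≤ _ := lintegral_sq_lintegral_mul_sub_le hg hh

theorem eLpNorm_integral_le_of_norm_le_mul_sub {E F : Type*} [NormedAddCommGroup E]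
    [NormedSpace ℝ E] [NormedAddCommGroup F] [MeasurableSpace F] [OpensMeasurableSpace F]
    {K : G → G → E} {g : G → ℝ} {ξ : G → F} (hg : Integrable g μ) (hg_meas : Measurable g)
    (hg0 : 0 ≤ g) (hξ : Measurable ξ) (hK : ∀ s t, ‖K s t‖ ≤ g t * ‖ξ (s - t)‖) :
    eLpNorm (fun s => ∫ t, K s t ∂μ) 2 μ ≤ ENNReal.ofReal (∫ t, g t ∂μ) * eLpNorm ξ 2 μ := by
  rw [ofReal_integral_eq_lintegral_ofReal hg (Eventually.of_forall hg0), ← eLpNorm_enorm ξ]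
  refine eLpNorm_two_le_of_enorm_le_lintegral_mul_sub hg_meas.ennreal_ofReal hξ.enorm
    fun s => (enorm_integral_le_lintegral_enorm _).trans (lintegral_mono fun t => ?_)
  rw [← ofReal_norm, ← ofReal_norm, ← ENNReal.ofReal_mul (hg0 t)]
  exact ENNReal.ofReal_le_ofReal (hK s t)

end Young

theorem SchwartzMap.integrable_pow_mul_one_add_rpow_mul {D V : Type*} [NormedAddCommGroup D]
    [NormedSpace ℝ D] [MeasurableSpace D] [BorelSpace D] [SecondCountableTopology D]
    [NormedAddCommGroup V] [NormedSpace ℝ V] (μ : Measure D) [μ.HasTemperateGrowth]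
    (f : SchwartzMap D V) (j : ℕ) (r : ℝ) :
    Integrable (fun x => ‖x‖ ^ j * (1 + ‖x‖) ^ r * ‖f x‖) μ := by
  set m := ⌈r⌉₊
  refine (((f.integrable_pow_mul μ j).add (f.integrable_pow_mul μ (j + m))).const_mul
    (2 ^ (m - 1))).mono' (by fun_prop) (Eventually.of_forall fun x => ?_)
  have hpow : (1 + ‖x‖) ^ r ≤ 2 ^ (m - 1) * (1 + ‖x‖ ^ m) := by
    calc (1 + ‖x‖) ^ r ≤ (1 + ‖x‖) ^ (m : ℝ) :=
          Real.rpow_le_rpow_of_exponent_le (by linarith [norm_nonneg x]) (Nat.le_ceil r)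
      _ = (1 + ‖x‖) ^ m := Real.rpow_natCast _ m
      _ ≤ 2 ^ (m - 1) * (1 ^ m + ‖x‖ ^ m) := add_pow_le zero_le_one (norm_nonneg x) m
      _ = 2 ^ (m - 1) * (1 + ‖x‖ ^ m) := by rw [one_pow]
  rw [Real.norm_of_nonneg (by positivity)]
  calc ‖x‖ ^ j * (1 + ‖x‖) ^ r * ‖f x‖ ≤ ‖x‖ ^ j * (2 ^ (m - 1) * (1 + ‖x‖ ^ m)) * ‖f x‖ := by
        gcongr
    _ = 2 ^ (m - 1) * (‖x‖ ^ j * ‖f x‖ + ‖x‖ ^ (j + m) * ‖f x‖) := by ring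

theorem Real.abs_sqrt_one_add_sq_sub_le (x y : ℝ) :
    |√(1 + x ^ 2) - √(1 + y ^ 2)| ≤ |x - y| := by
  have hA := Real.sq_sqrt (by positivity : (0 : ℝ) ≤ 1 + x ^ 2)
  have hB := Real.sq_sqrt (by positivity : (0 : ℝ) ≤ 1 + y ^ 2)
  have hxA : |x| ≤ √(1 + x ^ 2) := Real.abs_le_sqrt (by linarith)
  have hyB : |y| ≤ √(1 + y ^ 2) := Real.abs_le_sqrt (by linarith)
  have hApos : 0 < √(1 + x ^ 2) := Real.sqrt_pos.2 (by positivity)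
  have hBpos : 0 < √(1 + y ^ 2) := Real.sqrt_pos.2 (by positivity)
  -- `(A - B)(A + B) = (x - y)(x + y)` and `|x + y| ≤ A + B`.
  rw [abs_le]
  constructor <;> nlinarith [abs_nonneg (x - y), abs_add_le x y, le_abs_self (x - y),
    neg_abs_le (x - y), le_abs_self (x + y), neg_abs_le (x + y)]

section WeylOperator

variable {d : ℕ}

def japaneseBracket (r : Ed d) : ℝ := √(1 + ‖r‖ ^ 2)

local notation "⟪" r "⟫" => japaneseBracket r

theorem one_le_japaneseBracket (r : Ed d) : 1 ≤ ⟪r⟫ :=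
  Real.one_le_sqrt.2 (by linarith [sq_nonneg ‖r‖])

theorem japaneseBracket_pos (r : Ed d) : 0 < ⟪r⟫ :=
  one_pos.trans_le (one_le_japaneseBracket r)

theorem japaneseBracket_le (r : Ed d) : ⟪r⟫ ≤ 1 + ‖r‖ :=
  sqrt_one_add_norm_sq_le r

theorem abs_japaneseBracket_sub_le (a b : Ed d) : |⟪a⟫ - ⟪b⟫| ≤ ‖a - b‖ :=
  (Real.abs_sqrt_one_add_sq_sub_le _ _).trans (abs_norm_sub_norm_le a b)

@[fun_prop]
theorem continuous_japaneseBracket_rpow (β : ℝ) : Continuous fun r : Ed d => ⟪r⟫ ^ β :=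
  (by unfold japaneseBracket; fun_prop : Continuous fun r : Ed d => ⟪r⟫).rpow_const
    fun r => Or.inl (japaneseBracket_pos r).ne'

theorem Jpow_apply_eq (β : ℝ) (ξ : Ed d → ℂ) (r : Ed d) :
    Jpow β ξ r = ((⟪r⟫ ^ β : ℝ) : ℂ) * ξ r := by
  rw [Jpow, japaneseBracket, Real.sqrt_eq_rpow, ← Real.rpow_mul (by positivity),
    one_div_mul_eq_div]

theorem Jpow_Jpow (β γ : ℝ) (ξ : Ed d → ℂ) : Jpow γ (Jpow β ξ) = Jpow (γ + β) ξ := by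
  ext r
  simp only [Jpow_apply_eq, Real.rpow_add (japaneseBracket_pos r)]
  push_cast
  ring

theorem exists_norm_Jpow_le (β : ℝ) (ξ : SchwartzMap (Ed d) ℂ) :
    ∃ M, ∀ r, ‖Jpow β ξ r‖ ≤ M := by
  set m := ⌈β⌉₊
  refine ⟨2 ^ m * (Finset.Iic (m, 0)).sup (fun p => SchwartzMap.seminorm ℝ p.1 p.2) ξ,
    fun r => ?_⟩
  have hdecay :=
    SchwartzMap.one_add_le_sup_seminorm_apply (𝕜 := ℝ) (m := (m, 0)) le_rfl le_rfl ξ r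
  rw [norm_iteratedFDeriv_zero] at hdecay
  refine le_trans ?_ hdecay
  rw [Jpow_apply_eq, norm_mul, Complex.norm_real,
    Real.norm_of_nonneg (Real.rpow_nonneg (japaneseBracket_pos r).le _)]
  gcongr
  calc ⟪r⟫ ^ β ≤ ⟪r⟫ ^ (m : ℝ) :=
        Real.rpow_le_rpow_of_exponent_le (one_le_japaneseBracket r) (Nat.le_ceil β)
    _ = ⟪r⟫ ^ m := Real.rpow_natCast _ m
    _ ≤ (1 + ‖r‖) ^ m := by
        gcongr
        exacts [(japaneseBracket_pos r).le, japaneseBracket_le r]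

theorem norm_weyl_apply (θ : Matrix (Fin d) (Fin d) ℝ) (t : Ed d) (ξ : Ed d → ℂ) (s : Ed d) :
    ‖weyl θ t ξ s‖ = ‖ξ (s - t)‖ := by
  simp [weyl, norm_exp]

theorem weyl_Jpow_apply (θ : Matrix (Fin d) (Fin d) ℝ) (t : Ed d) (β : ℝ) (ξ : Ed d → ℂ)
    (s : Ed d) : weyl θ t (Jpow β ξ) s = ((⟪s - t⟫ ^ β : ℝ) : ℂ) * weyl θ t ξ s := by
  simp only [weyl, Jpow_apply_eq]
  ring

theorem continuous_weyl_apply_left (θ : Matrix (Fin d) (Fin d) ℝ) {ξ : Ed d → ℂ}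
    (hξ : Continuous ξ) (s : Ed d) : Continuous fun t => weyl θ t ξ s := by
  unfold weyl pairing
  fun_prop

def deltaKernel (θ : Matrix (Fin d) (Fin d) ℝ) (f ξ : Ed d → ℂ) (k : ℕ) (β : ℝ)
    (s t : Ed d) : ℂ :=
  f t * (((⟪s⟫ - ⟪s - t⟫) ^ k : ℝ) : ℂ) * weyl θ t (Jpow β ξ) s

theorem norm_deltaKernel_le (θ : Matrix (Fin d) (Fin d) ℝ) (f ξ : Ed d → ℂ) (k : ℕ) (β : ℝ)
    (s t : Ed d) :
    ‖deltaKernel θ f ξ k β s t‖ ≤ ‖t‖ ^ k * ‖f t‖ * ‖Jpow β ξ (s - t)‖ := by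
  have hΔ : |⟪s⟫ - ⟪s - t⟫| ≤ ‖t‖ := by simpa using abs_japaneseBracket_sub_le s (s - t)
  rw [deltaKernel, norm_mul, norm_mul, norm_weyl_apply, Complex.norm_real, norm_pow,
    Real.norm_eq_abs, mul_comm ‖f t‖]
  gcongr

theorem integrable_deltaKernel (θ : Matrix (Fin d) (Fin d) ℝ) (f ξ : SchwartzMap (Ed d) ℂ)
    (k : ℕ) (β : ℝ) (s : Ed d) : Integrable (deltaKernel θ f ξ k β s) := by
  obtain ⟨M, hM⟩ := exists_norm_Jpow_le β ξ
  have hJ : Continuous (Jpow β ξ) := by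
    rw [show Jpow β ξ = fun r => ((⟪r⟫ ^ β : ℝ) : ℂ) * ξ r from funext (Jpow_apply_eq β ξ)]
    fun_prop
  have hcont : Continuous (deltaKernel θ f ξ k β s) := by
    have := continuous_weyl_apply_left θ hJ s
    unfold deltaKernel japaneseBracket
    fun_prop
  refine ((f.integrable_pow_mul volume k).mul_const M).mono' hcont.aestronglyMeasurable
    (Eventually.of_forall fun t => (norm_deltaKernel_le θ f ξ k β s t).trans ?_)
  gcongr
  exact hM _

theorem Jpow_comm_eq_integral_deltaKernel (θ : Matrix (Fin d) (Fin d) ℝ)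
    (f ξ : SchwartzMap (Ed d) ℂ) (k : ℕ) {D : (Ed d → ℂ) → Ed d → ℂ}
    (hD : ∀ β s, D (Jpow β ξ) s = ∫ t, deltaKernel θ f ξ k β s t) (γ β : ℝ) (s : Ed d) :
    Jpow γ (D (Jpow β ξ)) s - D (Jpow γ (Jpow β ξ)) s
      = ∫ t, ((⟪s⟫ ^ γ - ⟪s - t⟫ ^ γ : ℝ) : ℂ) * deltaKernel θ f ξ k β s t := by
  rw [Jpow_apply_eq, Jpow_Jpow, hD, hD, ← integral_const_mul,
    ← integral_sub ((integrable_deltaKernel θ f ξ k β s).const_mul _)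
      (integrable_deltaKernel θ f ξ k (γ + β) s)]
  congr 1 with t
  simp only [deltaKernel, ← Jpow_Jpow, weyl_Jpow_apply]
  push_cast
  ring

theorem deltaIter_Jpow_eq_integral (θ : Matrix (Fin d) (Fin d) ℝ) (f ξ : SchwartzMap (Ed d) ℂ)
    (k : ℕ) (β : ℝ) (s : Ed d) :
    deltaIter (UfRaw θ f) k (Jpow β ξ) s = ∫ t, deltaKernel θ f ξ k β s t := by
  induction k generalizing β s with
  | zero => simp [deltaIter, UfRaw, deltaKernel]
  | succ k ih =>
    rw [deltaIter, deltaOp, Pi.sub_apply,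
      Jpow_comm_eq_integral_deltaKernel θ f ξ k (fun β s => ih β s) 1 β s]
    congr 1 with t
    simp only [deltaKernel, Real.rpow_one]
    push_cast
    ring

theorem norm_commutator_deltaKernel_le (θ : Matrix (Fin d) (Fin d) ℝ) (f ξ : Ed d → ℂ)
    (k : ℕ) {α : ℝ} (hα : 0 ≤ α) (s t : Ed d) :
    ‖((⟪s⟫ ^ α - ⟪s - t⟫ ^ α : ℝ) : ℂ) * deltaKernel θ f ξ k (1 - α) s t‖
      ≤ α * ‖t‖ ^ (k + 1) * (1 + ‖t‖) ^ |α - 1| * ‖f t‖ * ‖ξ (s - t)‖ := by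
  have hΔ : |⟪s⟫ - ⟪s - t⟫| ≤ ‖t‖ := by simpa using abs_japaneseBracket_sub_le s (s - t)
  have hkey : |⟪s⟫ ^ α - ⟪s - t⟫ ^ α| * ⟪s - t⟫ ^ (1 - α) ≤ α * ‖t‖ * (1 + ‖t‖) ^ |α - 1| :=
    (abs_rpow_sub_rpow_mul_rpow_le hα (one_le_japaneseBracket s)
      (one_le_japaneseBracket (s - t))).trans (by gcongr)
  calc ‖((⟪s⟫ ^ α - ⟪s - t⟫ ^ α : ℝ) : ℂ) * deltaKernel θ f ξ k (1 - α) s t‖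
      = (|⟪s⟫ ^ α - ⟪s - t⟫ ^ α| * ⟪s - t⟫ ^ (1 - α))
          * (|⟪s⟫ - ⟪s - t⟫| ^ k * ‖f t‖ * ‖ξ (s - t)‖) := by
        simp only [deltaKernel, norm_mul, norm_weyl_apply, Jpow_apply_eq, Complex.norm_real,
          norm_pow, Real.norm_eq_abs,
          abs_of_pos (Real.rpow_pos_of_pos (japaneseBracket_pos _) _)]
        ring
    _ ≤ (α * ‖t‖ * (1 + ‖t‖) ^ |α - 1|) * (‖t‖ ^ k * ‖f t‖ * ‖ξ (s - t)‖) := by gcongr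
    _ = α * ‖t‖ ^ (k + 1) * (1 + ‖t‖) ^ |α - 1| * ‖f t‖ * ‖ξ (s - t)‖ := by ring

end WeylOperator

theorem statement19_general (d : ℕ) (θ : Matrix (Fin d) (Fin d) ℝ)
    (f : SchwartzMap (Ed d) ℂ) (α : ℝ) (hα : 0 ≤ α) (k : ℕ) :
    ∃ C : ℝ, ∀ ξ : SchwartzMap (Ed d) ℂ,
      eLpNorm
        (Jpow α (deltaIter (UfRaw θ ⇑f) k (Jpow (1 - α) ⇑ξ))
          - deltaIter (UfRaw θ ⇑f) k (Jpow α (Jpow (1 - α) ⇑ξ)))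
        2 volume
      ≤ ENNReal.ofReal C * eLpNorm (⇑ξ) 2 volume := by
  set g : Ed d → ℝ := fun t => α * ‖t‖ ^ (k + 1) * (1 + ‖t‖) ^ |α - 1| * ‖f t‖
  have hg : Integrable g := by
    simpa only [g, mul_assoc] using
      (f.integrable_pow_mul_one_add_rpow_mul volume (k + 1) |α - 1|).const_mul α
  refine ⟨∫ t, g t, fun ξ => ?_⟩
  have hkernel : Jpow α (deltaIter (UfRaw θ ⇑f) k (Jpow (1 - α) ⇑ξ))
        - deltaIter (UfRaw θ ⇑f) k (Jpow α (Jpow (1 - α) ⇑ξ))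
      = fun s => ∫ t, ((japaneseBracket s ^ α - japaneseBracket (s - t) ^ α : ℝ) : ℂ)
          * deltaKernel θ f ξ k (1 - α) s t :=
    funext (Jpow_comm_eq_integral_deltaKernel θ f ξ k (deltaIter_Jpow_eq_integral θ f ξ k) α
      (1 - α))
  rw [hkernel]
  exact eLpNorm_integral_le_of_norm_le_mul_sub hg (by fun_prop) (fun t => by positivity)
    ξ.continuous.measurable (norm_commutator_deltaKernel_le θ f ξ k hα)

/-- For `x = U(f)` with `f` Schwartz, `α ≥ 0`, and `k ≥ 0`, the operator
`[J^α, δ^k(x)] J^{1−α}`, defined on the Schwartz space, extends to a bounded operator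
on `L²(ℝ^d; ℂ)`. -/
theorem statement19 (d : ℕ) (hd : 0 < d) (θ : Matrix (Fin d) (Fin d) ℝ)
    (hθ : θ.transpose = -θ) (f : SchwartzMap (Ed d) ℂ) (α : ℝ) (hα : 0 ≤ α) (k : ℕ) :
    ∃ C : ℝ, ∀ ξ : SchwartzMap (Ed d) ℂ,
      eLpNorm
        (Jpow α (deltaIter (UfRaw θ ⇑f) k (Jpow (1 - α) ⇑ξ))
          - deltaIter (UfRaw θ ⇑f) k (Jpow α (Jpow (1 - α) ⇑ξ)))
        2 volume
      ≤ ENNReal.ofReal C * eLpNorm (⇑ξ) 2 volume :=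
  statement19_general d θ f α hα k
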